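/- Let μ be a partition of n, ζ a corner cell of μ, and ν = μ∖{ζ}. Then in ℚ(q,t) the Pieri coefficient d_{μν}(q,t) := ∏_{α∈Row(ζ)} (q^{a_μ(α)−1} − t^{l_μ(α)+1})/(q^{a_μ(α)} − t^{l_μ(α)+1}) · ∏_{α∈Col(ζ)} (t^{l_μ(α)−1} − q^{a_μ(α)+1})/(t^{l_μ(α)} − q^{a_μ(α)+1}) satisfies the identity t^{l′(ζ)} q^{a′(ζ)} · d_{μν}(q,t) = (1−t)(1−q) · Π_ν / Π_{μ,ν}. -/

import Mathlib

open MvPolynomial Finset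

noncomputable section

/-- The field `ℚ(q,t)` of rational functions in two indeterminates over `ℚ`. -/
abbrev K : Type := FractionRing (MvPolynomial (Fin 2) ℚ)

/-- The indeterminate `q` in `ℚ(q,t)`. -/
def qq : K := algebraMap (MvPolynomial (Fin 2) ℚ) K (X 0)

/-- The indeterminate `t` in `ℚ(q,t)`. -/
def tt : K := algebraMap (MvPolynomial (Fin 2) ℚ) K (X 1)

/-- The arm `a_μ(i,j) = μ_{i+1} - 1 - j` of a cell of `μ` (as an integer). -/
def arm (μ : YoungDiagram) (c : ℕ × ℕ) : ℤ := (μ.rowLen c.1 : ℤ) - 1 - c.2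

/-- The leg of a cell of `μ` (as an integer). -/
def leg (μ : YoungDiagram) (c : ℕ × ℕ) : ℤ := (μ.colLen c.2 : ℤ) - 1 - c.1

/-- A corner cell of `μ`: a cell with arm and leg both zero. -/
def IsCornerCell (μ : YoungDiagram) (c : ℕ × ℕ) : Prop :=
  c ∈ μ ∧ arm μ c = 0 ∧ leg μ c = 0

/-- `Π_μ = ∏_{α∈μ} (1 - t^{1+l(α)} q^{-a(α)})(1 - t^{-l(α)} q^{1+a(α)})`. -/
def PiMu (μ : YoungDiagram) : K :=
  ∏ α ∈ μ.cells,
    ((1 - tt ^ (1 + leg μ α) * qq ^ (-(arm μ α))) *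
      (1 - tt ^ (-(leg μ α)) * qq ^ (1 + arm μ α)))

/-- `Π_{μ,ν} = (1-t)(1-q)·P₁·P₂·P₃` attached to a corner cell `ζ` of `μ`. -/
def PiMuNu (μ : YoungDiagram) (ζ : ℕ × ℕ) : K :=
  (1 - tt) * (1 - qq) *
    (∏ α ∈ μ.cells.filter (fun α => α.1 ≠ ζ.1 ∧ α.2 ≠ ζ.2),
      ((1 - tt ^ (1 + leg μ α) * qq ^ (-(arm μ α))) *
        (1 - tt ^ (-(leg μ α)) * qq ^ (1 + arm μ α)))) *
    (∏ α ∈ μ.cells.filter (fun α => α.1 = ζ.1 ∧ α ≠ ζ),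
      ((1 - tt ^ (1 + leg μ α) * qq ^ (-(arm μ α))) *
        (1 - tt ^ (-(leg μ α)) * qq ^ (arm μ α)))) *
    (∏ α ∈ μ.cells.filter (fun α => α.2 = ζ.2 ∧ α ≠ ζ),
      ((1 - tt ^ (-(leg μ α)) * qq ^ (1 + arm μ α)) *
        (1 - tt ^ (leg μ α) * qq ^ (-(arm μ α)))))


/-!
Removing the corner `ζ` shortens only the arms of the cells of `Row(ζ)` and the legs of the
cells of `Col(ζ)`, each by one. So the factor of `Π_ν` at a cell off `Row(ζ) ∪ Col(ζ)` is the
factor of `P₁` there, while at a cell of `Row(ζ)` (resp. `Col(ζ)`) it is `q` (resp. `t`) times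
the factor of `d_{μν}` times the factor of `P₂` (resp. `P₃`). As `|Row(ζ)| = a'(ζ)` and
`|Col(ζ)| = l'(ζ)`, this gives `Π_ν = t^{l'(ζ)} q^{a'(ζ)} d_{μν} P₁ P₂ P₃`. Finally `Π_{μ,ν} ≠ 0`:
each of its factors is `1 - t^x q^y` with `(x, y) ≠ (0, 0)`, and `t^x q^y ≠ 1` since these
Laurent monomials come from distinct monomials of `ℚ[q, t]`.
-/

lemma qq_ne_zero : qq ≠ 0 :=
  (map_ne_zero_iff _ (IsFractionRing.injective (MvPolynomial (Fin 2) ℚ) K)).2 (X_ne_zero 0)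

lemma tt_ne_zero : tt ≠ 0 :=
  (map_ne_zero_iff _ (IsFractionRing.injective (MvPolynomial (Fin 2) ℚ) K)).2 (X_ne_zero 1)

lemma qq_pow_mul_tt_pow_inj {a b c d : ℕ} (h : qq ^ a * tt ^ b = qq ^ c * tt ^ d) :
    a = c ∧ b = d := by
  have hX : (X 0 ^ a * X 1 ^ b : MvPolynomial (Fin 2) ℚ) = X 0 ^ c * X 1 ^ d :=
    IsFractionRing.injective (MvPolynomial (Fin 2) ℚ) K (by simpa [qq, tt] using h)
  simp only [X_pow_eq_monomial, monomial_mul, one_mul] at hX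
  have hexp := monomial_left_injective (one_ne_zero (α := ℚ)) hX
  exact ⟨by simpa using DFunLike.congr_fun hexp 0, by simpa using DFunLike.congr_fun hexp 1⟩

lemma qq_zpow_mul_tt_zpow_eq_one {m n : ℤ} (h : qq ^ m * tt ^ n = 1) : m = 0 ∧ n = 0 := by
  have hnat : qq ^ m.toNat * tt ^ n.toNat = qq ^ (-m).toNat * tt ^ (-n).toNat := by
    have hm : (m.toNat : ℤ) = m + (-m).toNat := by omega
    have hn : (n.toNat : ℤ) = n + (-n).toNat := by omega
    simp only [← zpow_natCast, hm, hn, zpow_add₀ qq_ne_zero, zpow_add₀ tt_ne_zero]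
    linear_combination (qq ^ ((-m).toNat : ℤ) * tt ^ ((-n).toNat : ℤ)) * h
  have := qq_pow_mul_tt_pow_inj hnat
  omega

lemma one_sub_tt_zpow_mul_qq_zpow_ne_zero {l a : ℤ} (h : l ≠ 0 ∨ a ≠ 0) :
    1 - tt ^ l * qq ^ a ≠ 0 := by
  intro h0
  have := qq_zpow_mul_tt_zpow_eq_one (m := a) (n := l) (by linear_combination -h0)
  omega

lemma qq_zpow_sub_tt_zpow_ne_zero (a : ℤ) {l : ℤ} (hl : l ≠ 0) : qq ^ a - tt ^ l ≠ 0 := by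
  have h := one_sub_tt_zpow_mul_qq_zpow_ne_zero (a := -a) (Or.inl hl)
  rw [zpow_neg, ← div_eq_mul_inv, one_sub_div (zpow_ne_zero a qq_ne_zero)] at h
  exact (div_ne_zero_iff.1 h).1

lemma tt_zpow_sub_qq_zpow_ne_zero (l : ℤ) {a : ℤ} (ha : a ≠ 0) : tt ^ l - qq ^ a ≠ 0 := by
  have h := one_sub_tt_zpow_mul_qq_zpow_ne_zero (l := -l) (Or.inr ha)
  rw [zpow_neg, inv_mul_eq_div, one_sub_div (zpow_ne_zero l tt_ne_zero)] at h
  exact (div_ne_zero_iff.1 h).1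

section CellIdentities

variable {F : Type*} [Field F] {q t : F}

lemma row_cell_factor_eq (hq : q ≠ 0) (ht : t ≠ 0) (a l : ℤ) (hden : q ^ a - t ^ (l + 1) ≠ 0) :
    (1 - t ^ (1 + l) * q ^ (-(a - 1))) * (1 - t ^ (-l) * q ^ (1 + (a - 1))) =
      q * ((q ^ (a - 1) - t ^ (l + 1)) / (q ^ a - t ^ (l + 1))) *
        ((1 - t ^ (1 + l) * q ^ (-a)) * (1 - t ^ (-l) * q ^ a)) := by
  rw [show 1 + (a - 1) = a by ring, neg_sub, zpow_sub₀ hq, zpow_sub₀ hq, zpow_add₀ ht,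
    zpow_add₀ ht, zpow_neg, zpow_neg, zpow_one, zpow_one] at *
  have hu : t ^ l ≠ 0 := zpow_ne_zero _ ht
  have hv : q ^ a ≠ 0 := zpow_ne_zero _ hq
  rw [mul_comm] at hden
  field_simp

lemma col_cell_factor_eq (hq : q ≠ 0) (ht : t ≠ 0) (a l : ℤ) (hden : t ^ l - q ^ (a + 1) ≠ 0) :
    (1 - t ^ (1 + (l - 1)) * q ^ (-a)) * (1 - t ^ (-(l - 1)) * q ^ (1 + a)) =
      t * ((t ^ (l - 1) - q ^ (a + 1)) / (t ^ l - q ^ (a + 1))) *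
        ((1 - t ^ (-l) * q ^ (1 + a)) * (1 - t ^ l * q ^ (-a))) := by
  rw [show 1 + (l - 1) = l by ring, neg_sub, zpow_sub₀ ht, zpow_sub₀ ht, zpow_add₀ hq,
    zpow_add₀ hq, zpow_neg, zpow_neg, zpow_one, zpow_one] at *
  have hu : t ^ l ≠ 0 := zpow_ne_zero _ ht
  have hv : q ^ a ≠ 0 := zpow_ne_zero _ hq
  field_simp

end CellIdentities

namespace YoungDiagram

lemma rowLen_eq_of_forall_mem_iff {μ : YoungDiagram} {i m : ℕ} (h : ∀ j, (i, j) ∈ μ ↔ j < m) :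
    μ.rowLen i = m :=
  eq_of_forall_lt_iff fun j => by rw [← mem_iff_lt_rowLen, h]

lemma colLen_eq_of_forall_mem_iff {μ : YoungDiagram} {j m : ℕ} (h : ∀ i, (i, j) ∈ μ ↔ i < m) :
    μ.colLen j = m :=
  eq_of_forall_lt_iff fun i => by rw [← mem_iff_lt_colLen, h]

end YoungDiagram

open YoungDiagram

section Corner

variable {μ ν : YoungDiagram} {ζ α : ℕ × ℕ}

lemma arm_nonneg (hα : α ∈ μ) : 0 ≤ arm μ α := by
  have := mem_iff_lt_rowLen.1 hα
  simp only [arm]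
  omega

lemma leg_nonneg (hα : α ∈ μ) : 0 ≤ leg μ α := by
  have := mem_iff_lt_colLen.1 hα
  simp only [leg]
  omega

namespace IsCornerCell

lemma rowLen_eq (hζ : IsCornerCell μ ζ) : μ.rowLen ζ.1 = ζ.2 + 1 := by
  obtain ⟨hmem, harm, -⟩ := hζ
  have := mem_iff_lt_rowLen.1 hmem
  simp only [arm] at harm
  omega

lemma colLen_eq (hζ : IsCornerCell μ ζ) : μ.colLen ζ.2 = ζ.1 + 1 := by
  obtain ⟨hmem, -, hleg⟩ := hζ
  have := mem_iff_lt_colLen.1 hmem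
  simp only [leg] at hleg
  omega

lemma one_le_arm (hζ : IsCornerCell μ ζ) (hα : α ∈ μ) (hrow : α.1 = ζ.1) (hne : α ≠ ζ) :
    1 ≤ arm μ α := by
  have hlt := mem_iff_lt_rowLen.1 hα
  have h2 : α.2 ≠ ζ.2 := fun h => hne (Prod.ext hrow h)
  rw [hrow, hζ.rowLen_eq] at hlt
  simp only [arm, hrow, hζ.rowLen_eq]
  omega

lemma one_le_leg (hζ : IsCornerCell μ ζ) (hα : α ∈ μ) (hcol : α.2 = ζ.2) (hne : α ≠ ζ) :
    1 ≤ leg μ α := by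
  have hlt := mem_iff_lt_colLen.1 hα
  have h1 : α.1 ≠ ζ.1 := fun h => hne (Prod.ext h hcol)
  rw [hcol, hζ.colLen_eq] at hlt
  simp only [leg, hcol, hζ.colLen_eq]
  omega

lemma card_row (hζ : IsCornerCell μ ζ) :
    (μ.cells.filter (fun α => α.1 = ζ.1 ∧ α ≠ ζ)).card = ζ.2 := by
  have hrow : μ.cells.filter (fun α => α.1 = ζ.1 ∧ α ≠ ζ) = (μ.row ζ.1).erase ζ := by
    ext α
    simp only [mem_filter, mem_erase, mem_cells, mem_row_iff]
    tauto
  rw [hrow, card_erase_of_mem (mem_row_iff.2 ⟨hζ.1, rfl⟩), ← rowLen_eq_card, hζ.rowLen_eq,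
    Nat.add_sub_cancel]

lemma card_col (hζ : IsCornerCell μ ζ) :
    (μ.cells.filter (fun α => α.2 = ζ.2 ∧ α ≠ ζ)).card = ζ.1 := by
  have hcol : μ.cells.filter (fun α => α.2 = ζ.2 ∧ α ≠ ζ) = (μ.col ζ.2).erase ζ := by
    ext α
    simp only [mem_filter, mem_erase, mem_cells, mem_col_iff]
    tauto
  rw [hcol, card_erase_of_mem (mem_col_iff.2 ⟨hζ.1, rfl⟩), ← colLen_eq_card, hζ.colLen_eq,
    Nat.add_sub_cancel]

end IsCornerCell

section Erase

variable (hν : ν.cells = μ.cells.erase ζ)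
include hν

lemma mem_of_cells_eq_erase {c : ℕ × ℕ} : c ∈ ν ↔ c ∈ μ ∧ c ≠ ζ := by
  rw [← mem_cells, hν, mem_erase, mem_cells, and_comm]

lemma arm_of_cells_eq_erase (hrow : α.1 ≠ ζ.1) : arm ν α = arm μ α := by
  have : ν.rowLen α.1 = μ.rowLen α.1 := rowLen_eq_of_forall_mem_iff fun j => by
    rw [mem_of_cells_eq_erase hν, mem_iff_lt_rowLen]
    exact and_iff_left fun h => hrow (by rw [← h])
  simp only [arm, this]

lemma leg_of_cells_eq_erase (hcol : α.2 ≠ ζ.2) : leg ν α = leg μ α := by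
  have : ν.colLen α.2 = μ.colLen α.2 := colLen_eq_of_forall_mem_iff fun i => by
    rw [mem_of_cells_eq_erase hν, mem_iff_lt_colLen]
    exact and_iff_left fun h => hcol (by rw [← h])
  simp only [leg, this]

lemma arm_of_cells_eq_erase_of_fst_eq (hζ : IsCornerCell μ ζ) (hrow : α.1 = ζ.1) :
    arm ν α = arm μ α - 1 := by
  have : ν.rowLen ζ.1 = ζ.2 := rowLen_eq_of_forall_mem_iff fun j => by
    rw [mem_of_cells_eq_erase hν, mem_iff_lt_rowLen, hζ.rowLen_eq, Ne, Prod.ext_iff]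
    omega
  simp only [arm, hrow, this, hζ.rowLen_eq]
  push_cast
  ring

lemma leg_of_cells_eq_erase_of_snd_eq (hζ : IsCornerCell μ ζ) (hcol : α.2 = ζ.2) :
    leg ν α = leg μ α - 1 := by
  have : ν.colLen ζ.2 = ζ.1 := colLen_eq_of_forall_mem_iff fun i => by
    rw [mem_of_cells_eq_erase hν, mem_iff_lt_colLen, hζ.colLen_eq, Ne, Prod.ext_iff]
    omega
  simp only [leg, hcol, this, hζ.colLen_eq]
  push_cast
  ring

end Erase

end Corner

lemma prod_erase_eq_off_mul_row_mul_col {β γ M : Type*} [DecidableEq β] [DecidableEq γ]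
    [CommMonoid M] (s : Finset (β × γ)) (z : β × γ) (f : β × γ → M) :
    ∏ x ∈ s.erase z, f x =
      (∏ x ∈ s.filter (fun x => x.1 ≠ z.1 ∧ x.2 ≠ z.2), f x) *
        (∏ x ∈ s.filter (fun x => x.1 = z.1 ∧ x ≠ z), f x) *
        ∏ x ∈ s.filter (fun x => x.2 = z.2 ∧ x ≠ z), f x := by
  have hrow : (s.erase z).filter (fun x => x.1 = z.1) = s.filter (fun x => x.1 = z.1 ∧ x ≠ z) := by
    ext x
    simp only [mem_filter, mem_erase]
    tauto
  have hcol : ((s.erase z).filter (fun x => ¬x.1 = z.1)).filter (fun x => x.2 = z.2) =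
      s.filter (fun x => x.2 = z.2 ∧ x ≠ z) := by
    ext x
    simp only [mem_filter, mem_erase, ne_eq, Prod.ext_iff]
    tauto
  have hoff : ((s.erase z).filter (fun x => ¬x.1 = z.1)).filter (fun x => ¬x.2 = z.2) =
      s.filter (fun x => x.1 ≠ z.1 ∧ x.2 ≠ z.2) := by
    ext x
    simp only [mem_filter, mem_erase, ne_eq, Prod.ext_iff]
    tauto
  rw [← prod_filter_mul_prod_filter_not (s.erase z) (fun x => x.1 = z.1),
    ← prod_filter_mul_prod_filter_not ((s.erase z).filter (fun x => ¬x.1 = z.1))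
      (fun x => x.2 = z.2), hrow, hcol, hoff]
  ac_rfl

def cellFactor (a l : ℤ) : K :=
  (1 - tt ^ (1 + l) * qq ^ (-a)) * (1 - tt ^ (-l) * qq ^ (1 + a))

section Corner

variable {μ ν : YoungDiagram} {ζ : ℕ × ℕ}

lemma PiMuNu_ne_zero (hζ : IsCornerCell μ ζ) : PiMuNu μ ζ ≠ 0 := by
  have hfac {x y : ℤ} (h : x ≠ 0 ∨ y ≠ 0) := one_sub_tt_zpow_mul_qq_zpow_ne_zero h
  have h1t : (1 : K) - tt ≠ 0 := by simpa using hfac (x := 1) (y := 0) (by simp)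
  have h1q : (1 : K) - qq ≠ 0 := by simpa using hfac (x := 0) (y := 1) (by simp)
  refine mul_ne_zero (mul_ne_zero (mul_ne_zero (mul_ne_zero h1t h1q) ?_) ?_) ?_ <;>
    refine prod_ne_zero_iff.2 fun α hα => ?_ <;>
    simp only [mem_filter, mem_cells] at hα <;>
    have ha := arm_nonneg hα.1 <;> have hl := leg_nonneg hα.1
  · exact mul_ne_zero (hfac (by omega)) (hfac (by omega))
  · have := hζ.one_le_arm hα.1 hα.2.1 hα.2.2
    exact mul_ne_zero (hfac (by omega)) (hfac (by omega))
  · have := hζ.one_le_leg hα.1 hα.2.1 hα.2.2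
    exact mul_ne_zero (hfac (by omega)) (hfac (by omega))

variable (hν : ν.cells = μ.cells.erase ζ)
include hν

lemma prod_off_cellFactor_of_cells_eq_erase :
    ∏ α ∈ μ.cells.filter (fun α => α.1 ≠ ζ.1 ∧ α.2 ≠ ζ.2), cellFactor (arm ν α) (leg ν α) =
      ∏ α ∈ μ.cells.filter (fun α => α.1 ≠ ζ.1 ∧ α.2 ≠ ζ.2), cellFactor (arm μ α) (leg μ α) :=
  prod_congr rfl fun α hα => by
    obtain ⟨-, hrow, hcol⟩ := mem_filter.1 hα
    rw [arm_of_cells_eq_erase hν hrow, leg_of_cells_eq_erase hν hcol]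

lemma prod_row_cellFactor_of_cells_eq_erase (hζ : IsCornerCell μ ζ) :
    ∏ α ∈ μ.cells.filter (fun α => α.1 = ζ.1 ∧ α ≠ ζ), cellFactor (arm ν α) (leg ν α) =
      qq ^ ζ.2 *
        (∏ α ∈ μ.cells.filter (fun α => α.1 = ζ.1 ∧ α ≠ ζ),
          (qq ^ (arm μ α - 1) - tt ^ (leg μ α + 1)) / (qq ^ (arm μ α) - tt ^ (leg μ α + 1))) *
        ∏ α ∈ μ.cells.filter (fun α => α.1 = ζ.1 ∧ α ≠ ζ),
          (1 - tt ^ (1 + leg μ α) * qq ^ (-(arm μ α))) * (1 - tt ^ (-(leg μ α)) * qq ^ (arm μ α)) := by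
  have hcell : ∀ α ∈ μ.cells.filter (fun α => α.1 = ζ.1 ∧ α ≠ ζ),
      cellFactor (arm ν α) (leg ν α) =
        qq * ((qq ^ (arm μ α - 1) - tt ^ (leg μ α + 1)) / (qq ^ (arm μ α) - tt ^ (leg μ α + 1))) *
          ((1 - tt ^ (1 + leg μ α) * qq ^ (-(arm μ α))) *
            (1 - tt ^ (-(leg μ α)) * qq ^ (arm μ α))) := by
    intro α hα
    obtain ⟨hmem, hrow, hne⟩ : α ∈ μ ∧ α.1 = ζ.1 ∧ α ≠ ζ := by simpa using hα
    have hl := leg_nonneg hmem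
    rw [arm_of_cells_eq_erase_of_fst_eq hν hζ hrow,
      leg_of_cells_eq_erase hν fun h => hne (Prod.ext hrow h)]
    exact row_cell_factor_eq qq_ne_zero tt_ne_zero _ _
      (qq_zpow_sub_tt_zpow_ne_zero _ (by omega))
  rw [prod_congr rfl hcell, prod_mul_distrib, prod_mul_distrib, prod_const, hζ.card_row]

lemma prod_col_cellFactor_of_cells_eq_erase (hζ : IsCornerCell μ ζ) :
    ∏ α ∈ μ.cells.filter (fun α => α.2 = ζ.2 ∧ α ≠ ζ), cellFactor (arm ν α) (leg ν α) =
      tt ^ ζ.1 *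
        (∏ α ∈ μ.cells.filter (fun α => α.2 = ζ.2 ∧ α ≠ ζ),
          (tt ^ (leg μ α - 1) - qq ^ (arm μ α + 1)) / (tt ^ (leg μ α) - qq ^ (arm μ α + 1))) *
        ∏ α ∈ μ.cells.filter (fun α => α.2 = ζ.2 ∧ α ≠ ζ),
          (1 - tt ^ (-(leg μ α)) * qq ^ (1 + arm μ α)) * (1 - tt ^ (leg μ α) * qq ^ (-(arm μ α))) := by
  have hcell : ∀ α ∈ μ.cells.filter (fun α => α.2 = ζ.2 ∧ α ≠ ζ),
      cellFactor (arm ν α) (leg ν α) =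
        tt * ((tt ^ (leg μ α - 1) - qq ^ (arm μ α + 1)) / (tt ^ (leg μ α) - qq ^ (arm μ α + 1))) *
          ((1 - tt ^ (-(leg μ α)) * qq ^ (1 + arm μ α)) *
            (1 - tt ^ (leg μ α) * qq ^ (-(arm μ α)))) := by
    intro α hα
    obtain ⟨hmem, hcol, hne⟩ : α ∈ μ ∧ α.2 = ζ.2 ∧ α ≠ ζ := by simpa using hα
    have ha := arm_nonneg hmem
    rw [arm_of_cells_eq_erase hν fun h => hne (Prod.ext h hcol),
      leg_of_cells_eq_erase_of_snd_eq hν hζ hcol]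
    exact col_cell_factor_eq qq_ne_zero tt_ne_zero _ _
      (tt_zpow_sub_qq_zpow_ne_zero _ (by omega))
  rw [prod_congr rfl hcell, prod_mul_distrib, prod_mul_distrib, prod_const, hζ.card_col]

end Corner

theorem pieri_d_eq_general (μ ν : YoungDiagram)
    (ζ : ℕ × ℕ) (hζ : IsCornerCell μ ζ) (hν : ν.cells = μ.cells.erase ζ) :
    tt ^ (ζ.1 : ℤ) * qq ^ (ζ.2 : ℤ) *
      ((∏ α ∈ μ.cells.filter (fun α => α.1 = ζ.1 ∧ α ≠ ζ),
          (qq ^ (arm μ α - 1) - tt ^ (leg μ α + 1)) /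
            (qq ^ (arm μ α) - tt ^ (leg μ α + 1))) *
        (∏ α ∈ μ.cells.filter (fun α => α.2 = ζ.2 ∧ α ≠ ζ),
          (tt ^ (leg μ α - 1) - qq ^ (arm μ α + 1)) /
            (tt ^ (leg μ α) - qq ^ (arm μ α + 1)))) =
      (1 - tt) * (1 - qq) * PiMu ν / PiMuNu μ ζ := by
  have hPiMu : PiMu ν = ∏ α ∈ μ.cells.erase ζ, cellFactor (arm ν α) (leg ν α) := by
    rw [← hν]
    rfl
  rw [eq_div_iff (PiMuNu_ne_zero hζ), hPiMu, prod_erase_eq_off_mul_row_mul_col,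
    prod_off_cellFactor_of_cells_eq_erase hν, prod_row_cellFactor_of_cells_eq_erase hν hζ,
    prod_col_cellFactor_of_cells_eq_erase hν hζ, PiMuNu]
  simp only [cellFactor, zpow_natCast]
  ring

/-- The Pieri coefficient `d_{μν}` satisfies
`t^{l'(ζ)} q^{a'(ζ)} · d_{μν} = (1-t)(1-q) · Π_ν / Π_{μ,ν}`. -/
theorem pieri_d_eq (n : ℕ) (μ ν : YoungDiagram) (hμ : μ.card = n)
    (ζ : ℕ × ℕ) (hζ : IsCornerCell μ ζ) (hν : ν.cells = μ.cells.erase ζ) :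
    tt ^ (ζ.1 : ℤ) * qq ^ (ζ.2 : ℤ) *
      ((∏ α ∈ μ.cells.filter (fun α => α.1 = ζ.1 ∧ α ≠ ζ),
          (qq ^ (arm μ α - 1) - tt ^ (leg μ α + 1)) /
            (qq ^ (arm μ α) - tt ^ (leg μ α + 1))) *
        (∏ α ∈ μ.cells.filter (fun α => α.2 = ζ.2 ∧ α ≠ ζ),
          (tt ^ (leg μ α - 1) - qq ^ (arm μ α + 1)) /
            (tt ^ (leg μ α) - qq ^ (arm μ α + 1)))) =
      (1 - tt) * (1 - qq) * PiMu ν / PiMuNu μ ζ :=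
  pieri_d_eq_general μ ν ζ hζ hν
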